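/- Let u : ℝ → ℝ be infinitely differentiable with u(x) > 0 at a point x ∈ ℝ, let f(v) = v²/2 be the Burgers flux, and take κ = 1/3. Then as h → 0⁺ the UMUSCL residual satisfies Res(h) = (1/12)·u′(x)u″(x)·h² + (1/12)·[u(x)u⁗(x) + u′(x)u‴(x)]·h³ + O(h⁴), where the second-order term comes from the averaged-flux part and the third-order term from the dissipation part of the numerical flux. -/

import Mathlib

open Filter Topology Asymptotics

/-- Van Leer κ-reconstructed left state at the face `x + h/2`. -/
noncomputable def uLp (κ : ℝ) (u : ℝ → ℝ) (x h : ℝ) : ℝ :=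
  κ * (u x + u (x + h)) / 2 + (1 - κ) * (u x + (u (x + h) - u (x - h)) / 4)

/-- Van Leer κ-reconstructed right state at the face `x + h/2`. -/
noncomputable def uRp (κ : ℝ) (u : ℝ → ℝ) (x h : ℝ) : ℝ :=
  κ * (u (x + h) + u x) / 2 + (1 - κ) * (u (x + h) - (u (x + 2 * h) - u x) / 4)

/-- Van Leer κ-reconstructed left state at the face `x − h/2`. -/
noncomputable def uLm (κ : ℝ) (u : ℝ → ℝ) (x h : ℝ) : ℝ :=
  κ * (u (x - h) + u x) / 2 + (1 - κ) * (u (x - h) + (u x - u (x - 2 * h)) / 4)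

/-- Van Leer κ-reconstructed right state at the face `x − h/2`. -/
noncomputable def uRm (κ : ℝ) (u : ℝ → ℝ) (x h : ℝ) : ℝ :=
  κ * (u x + u (x - h)) / 2 + (1 - κ) * (u x - (u (x + h) - u (x - h)) / 4)

/-- The UMUSCL numerical flux `F(a,b) = (f(a)+f(b))/2 − (|f′((a+b)/2)|/2)(b−a)`. -/
noncomputable def numFlux (f : ℝ → ℝ) (a b : ℝ) : ℝ :=
  (f a + f b) / 2 - (|deriv f ((a + b) / 2)| / 2) * (b - a)

/-- The UMUSCL residual at `x` for the steady conservation law `∂ₓ f(u) = s`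
with forcing `s(y) = d/dy f(u(y))`. -/
noncomputable def umusclRes (f : ℝ → ℝ) (κ : ℝ) (u : ℝ → ℝ) (x h : ℝ) : ℝ :=
  (numFlux f (uLp κ u x h) (uRp κ u x h) - numFlux f (uLm κ u x h) (uRm κ u x h)) / h
    - deriv f (u x) * deriv u x

/-!-/
lemma taylor_isBigO : ∀ (n : ℕ) (g : ℝ → ℝ), ContDiff ℝ (⊤ : ℕ∞) g →
    (fun t : ℝ => g t - ∑ k ∈ Finset.range (n + 1),
        iteratedDeriv k g 0 * t ^ k / (k.factorial : ℝ))
      =O[𝓝 (0 : ℝ)] fun t => t ^ (n + 1) := by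
  intro n
  induction n with
  | zero =>
    intro g hg
    have h1 : (fun t : ℝ => g t - ∑ k ∈ Finset.range 1,
        iteratedDeriv k g 0 * t ^ k / (k.factorial : ℝ)) = fun t => g t - g 0 := by
      funext t; simp
    rw [h1]
    simpa using ((hg.differentiable (by simp)) 0).hasDerivAt.isBigO_sub
  | succ n IH =>
    intro g hg
    have hg' : ContDiff ℝ (⊤ : ℕ∞) (deriv g) := (contDiff_infty_iff_deriv.mp hg).2
    set R : ℝ → ℝ := fun t => g t - ∑ k ∈ Finset.range (n + 2),
        iteratedDeriv k g 0 * t ^ k / (k.factorial : ℝ) with hRdef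
    set R' : ℝ → ℝ := fun t => deriv g t - ∑ k ∈ Finset.range (n + 1),
        iteratedDeriv k (deriv g) 0 * t ^ k / (k.factorial : ℝ) with hR'def
    have hR0 : R 0 = 0 := by
      simp [hRdef, Finset.sum_range_succ']
    have hderiv : ∀ t : ℝ, HasDerivAt R (R' t) t := by
      intro t
      have h1 : HasDerivAt g (deriv g t) t := ((hg.differentiable (by simp)) t).hasDerivAt
      have h2 : HasDerivAt (fun t : ℝ => ∑ k ∈ Finset.range (n + 2),
          iteratedDeriv k g 0 * t ^ k / (k.factorial : ℝ))
          (∑ k ∈ Finset.range (n + 2),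
            iteratedDeriv k g 0 * ((k : ℝ) * t ^ (k - 1)) / (k.factorial : ℝ)) t := by
        apply HasDerivAt.fun_sum
        intro k _
        simpa [mul_div_assoc] using
          ((hasDerivAt_pow k t).const_mul (iteratedDeriv k g 0)).div_const (k.factorial : ℝ)
      have h3 : (∑ k ∈ Finset.range (n + 2),
          iteratedDeriv k g 0 * ((k : ℝ) * t ^ (k - 1)) / (k.factorial : ℝ))
          = ∑ k ∈ Finset.range (n + 1),
            iteratedDeriv k (deriv g) 0 * t ^ k / (k.factorial : ℝ) := by
        rw [Finset.sum_range_succ']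
        simp only [Nat.cast_zero, zero_mul, mul_zero, zero_div, add_zero, Nat.factorial_zero]
        apply Finset.sum_congr rfl
        intro k _
        rw [← iteratedDeriv_succ']
        have hfact : ((k + 1).factorial : ℝ) = (k + 1 : ℝ) * (k.factorial : ℝ) := by
          rw [Nat.factorial_succ]; push_cast; ring
        have hk1 : (k + 1 : ℝ) ≠ 0 := by positivity
        have hkf : ((k.factorial : ℝ)) ≠ 0 := by positivity
        simp only [Nat.add_sub_cancel, Nat.cast_add, Nat.cast_one, hfact]
        field_simp
      have := h1.sub h2
      rw [h3] at this
      exact this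
    obtain ⟨C, hCpos, hC⟩ := (IH (deriv g) hg').exists_pos
    have hC' : ∀ᶠ t in 𝓝 (0 : ℝ), ‖R' t‖ ≤ C * ‖t ^ (n + 1)‖ := hC.bound
    rw [Metric.eventually_nhds_iff] at hC'
    obtain ⟨ε, hε, hball⟩ := hC'
    rw [isBigO_iff]
    refine ⟨C, ?_⟩
    rw [Metric.eventually_nhds_iff]
    refine ⟨ε, hε, fun t ht => ?_⟩
    have key : ∀ s ∈ segment ℝ (0 : ℝ) t, ‖R' s‖ ≤ C * |t| ^ (n + 1) := by
      intro s hs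
      obtain ⟨a, b, ha, hb, hab, rfl⟩ := hs
      have hb1 : b ≤ 1 := by linarith
      have habs : |a • (0 : ℝ) + b • t| ≤ |t| := by
        simp only [smul_eq_mul, mul_zero, zero_add, abs_mul, abs_of_nonneg hb]
        nlinarith [abs_nonneg t]
      have hdist : dist (a • (0 : ℝ) + b • t) 0 < ε := by
        rw [Real.dist_eq, sub_zero]
        rw [Real.dist_eq, sub_zero] at ht
        exact lt_of_le_of_lt habs ht
      calc ‖R' (a • (0 : ℝ) + b • t)‖ ≤ C * ‖(a • (0 : ℝ) + b • t) ^ (n + 1)‖ := hball hdist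
        _ = C * |a • (0 : ℝ) + b • t| ^ (n + 1) := by rw [norm_pow, Real.norm_eq_abs]
        _ ≤ C * |t| ^ (n + 1) := by gcongr <;> first | exact abs_nonneg _ | exact habs
    have hmvt := (convex_segment (0 : ℝ) t).norm_image_sub_le_of_norm_hasDerivWithin_le
      (fun s hs => (hderiv s).hasDerivWithinAt) key
      (left_mem_segment ℝ (0 : ℝ) t) (right_mem_segment ℝ (0 : ℝ) t)
    rw [hR0, sub_zero, sub_zero] at hmvt
    calc ‖R t‖ ≤ C * |t| ^ (n + 1) * ‖t‖ := hmvt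
      _ = C * ‖t ^ (n + 1 + 1)‖ := by
          rw [norm_pow, Real.norm_eq_abs, pow_succ]; ring

lemma shiftTaylor (u : ℝ → ℝ) (hu : ContDiff ℝ (⊤ : ℕ∞) u) (x c : ℝ) :
    (fun h : ℝ => u (x + c * h) -
      (u x + c * deriv u x * h + c ^ 2 * iteratedDeriv 2 u x * h ^ 2 / 2
        + c ^ 3 * iteratedDeriv 3 u x * h ^ 3 / 6 + c ^ 4 * iteratedDeriv 4 u x * h ^ 4 / 24))
      =O[𝓝 (0 : ℝ)] fun h => h ^ 5 := by
  have hshift : ContDiff ℝ (⊤ : ℕ∞) (fun z : ℝ => u (x + z)) :=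
    hu.comp (contDiff_const.add contDiff_id)
  have hg : ContDiff ℝ (⊤ : ℕ∞) (fun t : ℝ => u (x + c * t)) :=
    hshift.comp (contDiff_const.mul contDiff_id)
  have hcoef : ∀ k : ℕ, iteratedDeriv k (fun t : ℝ => u (x + c * t)) 0
      = c ^ k * iteratedDeriv k u x := by
    intro k
    have h2 := iteratedDeriv_comp_const_mul (n := k) (f := fun z : ℝ => u (x + z))
      (hshift.of_le (mod_cast (le_top : (k : ℕ∞) ≤ ⊤))) c
    have h3 := iteratedDeriv_comp_const_add k u x
    calc iteratedDeriv k (fun t : ℝ => u (x + c * t)) 0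
        = c ^ k * iteratedDeriv k (fun z : ℝ => u (x + z)) (c * 0) := congrFun h2 0
      _ = c ^ k * iteratedDeriv k u x := by rw [h3]; norm_num
  have := taylor_isBigO 4 _ hg
  refine this.congr_left fun h => ?_
  rw [show (4 + 1) = 5 from rfl, Finset.sum_range_succ, Finset.sum_range_succ,
    Finset.sum_range_succ, Finset.sum_range_succ, Finset.sum_range_succ]
  simp only [hcoef, iteratedDeriv_zero, iteratedDeriv_one, Finset.range_zero,
    Finset.sum_empty, Nat.factorial]
  push_cast
  ring

/-- Degree-4 Taylor polynomial of `h ↦ u (x + c h)`. -/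
noncomputable def Tpoly (u : ℝ → ℝ) (x c h : ℝ) : ℝ :=
  u x + c * deriv u x * h + c ^ 2 * iteratedDeriv 2 u x * h ^ 2 / 2
    + c ^ 3 * iteratedDeriv 3 u x * h ^ 3 / 6 + c ^ 4 * iteratedDeriv 4 u x * h ^ 4 / 24

/-- Polynomial part of `uLp` at `κ = 1/3`. -/
noncomputable def Apoly (u : ℝ → ℝ) (x h : ℝ) : ℝ :=
  (5 / 6) * u x + (1 / 3) * Tpoly u x 1 h - (1 / 6) * Tpoly u x (-1) h

/-- Polynomial part of `uLm` at `κ = 1/3`. -/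
noncomputable def Bpoly (u : ℝ → ℝ) (x h : ℝ) : ℝ :=
  (5 / 6) * Tpoly u x (-1) h + (1 / 3) * u x - (1 / 6) * Tpoly u x (-2) h

/-- Quotient polynomial in the exact truncation-error identity. -/
noncomputable def Qpoly (u : ℝ → ℝ) (x h : ℝ) : ℝ :=
  -(5 / 144) * deriv u x * iteratedDeriv 4 u x
    + (1 / 144) * iteratedDeriv 2 u x * iteratedDeriv 4 u x * h
    + (1 / 144) * iteratedDeriv 3 u x * iteratedDeriv 4 u x * h ^ 2
    - (5 / 1728) * iteratedDeriv 4 u x ^ 2 * h ^ 3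


/-- For the Burgers flux `f(v) = v²/2`, `κ = 1/3`, smooth `u` with `u(x) > 0`, the
UMUSCL residual satisfies
`Res(h) = (1/12) u′ u″ h² + (1/12) [u u⁗ + u′ u‴] h³ + O(h⁴)` as `h → 0⁺`. -/
theorem umuscl_burgers_truncation_error
    (u : ℝ → ℝ) (hu : ContDiff ℝ (⊤ : ℕ∞) u) (x : ℝ) (hx : 0 < u x)
    (f : ℝ → ℝ) (hf : ∀ v : ℝ, f v = v ^ 2 / 2) :
    (fun h : ℝ => umusclRes f (1 / 3) u x h -
        ((1 / 12) * (deriv u x * iteratedDeriv 2 u x) * h ^ 2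
          + (1 / 12) * (u x * iteratedDeriv 4 u x + deriv u x * iteratedDeriv 3 u x)
            * h ^ 3))
      =O[𝓝[>] (0 : ℝ)] fun h : ℝ => h ^ 4 := by
  have hu' : ContDiff ℝ (⊤ : ℕ∞) u := hu.of_le (by simp)
  have hcu : Continuous u := hu'.continuous
  have hdf : ∀ v : ℝ, deriv f v = v := by
    intro v
    have hfe : f = fun v : ℝ => v ^ 2 / 2 := funext hf
    rw [hfe, deriv_div_const]
    simp [deriv_pow]
  -- continuity facts
  have hTc : ∀ c : ℝ, Continuous (fun h => Tpoly u x c h) := by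
    intro c; unfold Tpoly; fun_prop
  have hAc : Continuous (fun h => Apoly u x h) := by
    unfold Apoly; exact (continuous_const.add (continuous_const.mul (hTc 1))).sub (continuous_const.mul (hTc (-1)))
  have hBc : Continuous (fun h => Bpoly u x h) := by
    unfold Bpoly; exact ((continuous_const.mul (hTc (-1))).add continuous_const).sub (continuous_const.mul (hTc (-2)))
  have hQc : Continuous (fun h => Qpoly u x h) := by unfold Qpoly; fun_prop
  have hLpc : Continuous (fun h => uLp (1 / 3) u x h) := by unfold uLp; fun_prop
  have hRpc : Continuous (fun h => uRp (1 / 3) u x h) := by unfold uRp; fun_prop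
  have hLmc : Continuous (fun h => uLm (1 / 3) u x h) := by unfold uLm; fun_prop
  have hRmc : Continuous (fun h => uRm (1 / 3) u x h) := by unfold uRm; fun_prop
  -- eventual positivity of the face averages
  have hposp : ∀ᶠ h in 𝓝[>] (0 : ℝ), 0 < uLp (1 / 3) u x h + uRp (1 / 3) u x h := by
    have ht : Tendsto (fun h => uLp (1 / 3) u x h + uRp (1 / 3) u x h) (𝓝[>] (0 : ℝ))
        (𝓝 (2 * u x)) := by
      have h0 : uLp (1 / 3) u x 0 + uRp (1 / 3) u x 0 = 2 * u x := by
        simp [uLp, uRp]; ring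
      have := ((hLpc.add hRpc).tendsto 0).mono_left (nhdsWithin_le_nhds (s := Set.Ioi (0:ℝ)))
      rwa [show ((fun h => uLp (1 / 3) u x h) + fun h => uRp (1 / 3) u x h) 0 = 2 * u x from h0] at this
    exact ht.eventually (eventually_gt_nhds (by linarith))
  have hposm : ∀ᶠ h in 𝓝[>] (0 : ℝ), 0 < uLm (1 / 3) u x h + uRm (1 / 3) u x h := by
    have ht : Tendsto (fun h => uLm (1 / 3) u x h + uRm (1 / 3) u x h) (𝓝[>] (0 : ℝ))
        (𝓝 (2 * u x)) := by
      have h0 : uLm (1 / 3) u x 0 + uRm (1 / 3) u x 0 = 2 * u x := by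
        simp [uLm, uRm]; ring
      have := ((hLmc.add hRmc).tendsto 0).mono_left (nhdsWithin_le_nhds (s := Set.Ioi (0:ℝ)))
      rwa [show ((fun h => uLm (1 / 3) u x h) + fun h => uRm (1 / 3) u x h) 0 = 2 * u x from h0] at this
    exact ht.eventually (eventually_gt_nhds (by linarith))
  -- Taylor remainders
  have hr1 : (fun h : ℝ => u (x + h) - Tpoly u x 1 h) =O[𝓝 (0 : ℝ)] fun h => h ^ 5 := by
    refine (shiftTaylor u hu' x 1).congr_left fun h => ?_
    rw [one_mul]; unfold Tpoly
    rfl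
  have hrm1 : (fun h : ℝ => u (x - h) - Tpoly u x (-1) h) =O[𝓝 (0 : ℝ)] fun h => h ^ 5 := by
    refine (shiftTaylor u hu' x (-1)).congr_left fun h => ?_
    rw [show x + (-1) * h = x - h from by ring]; unfold Tpoly
    rfl
  have hrm2 : (fun h : ℝ => u (x - 2 * h) - Tpoly u x (-2) h) =O[𝓝 (0 : ℝ)] fun h => h ^ 5 := by
    refine (shiftTaylor u hu' x (-2)).congr_left fun h => ?_
    rw [show x + (-2) * h = x - 2 * h from by ring]; unfold Tpoly
    rfl
  -- reconstruction remainders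
  have hp : (fun h : ℝ => uLp (1 / 3) u x h - Apoly u x h) =O[𝓝 (0 : ℝ)] fun h => h ^ 5 := by
    refine ((hr1.const_mul_left (1 / 3)).sub (hrm1.const_mul_left (1 / 6))).congr_left
      fun h => ?_
    unfold uLp Apoly; ring
  have hq : (fun h : ℝ => uLm (1 / 3) u x h - Bpoly u x h) =O[𝓝 (0 : ℝ)] fun h => h ^ 5 := by
    refine ((hrm1.const_mul_left (5 / 6)).sub (hrm2.const_mul_left (1 / 6))).congr_left
      fun h => ?_
    unfold uLm Bpoly; ring
  -- O(1) facts
  have hA1 : (fun h : ℝ => uLp (1 / 3) u x h + Apoly u x h) =O[𝓝 (0 : ℝ)]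
      (fun _ : ℝ => (1 : ℝ)) := ((hLpc.add hAc).tendsto 0).isBigO_one ℝ
  have hB1 : (fun h : ℝ => uLm (1 / 3) u x h + Bpoly u x h) =O[𝓝 (0 : ℝ)]
      (fun _ : ℝ => (1 : ℝ)) := ((hLmc.add hBc).tendsto 0).isBigO_one ℝ
  have hQ1 : (fun h : ℝ => Qpoly u x h) =O[𝓝[>] (0 : ℝ)] (fun _ : ℝ => (1 : ℝ)) :=
    ((hQc.tendsto 0).mono_left (nhdsWithin_le_nhds (s := Set.Ioi (0:ℝ)))).isBigO_one ℝ
  -- the squared-difference term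
  have hN : (fun h : ℝ => ((uLp (1 / 3) u x h) ^ 2 - Apoly u x h ^ 2)
      - ((uLm (1 / 3) u x h) ^ 2 - Bpoly u x h ^ 2)) =O[𝓝 (0 : ℝ)] fun h => h ^ 5 := by
    have := (hp.mul hA1).sub (hq.mul hB1)
    refine (this.congr (fun h => by ring) (fun h => by ring))
  -- first O(h^4) term
  have hterm1 : (fun h : ℝ => h ^ 4 * Qpoly u x h) =O[𝓝[>] (0 : ℝ)] fun h => h ^ 4 := by
    have := (isBigO_refl (fun h : ℝ => h ^ 4) (𝓝[>] (0 : ℝ))).mul hQ1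
    simpa using this
  -- second O(h^4) term
  have hterm2 : (fun h : ℝ => (((uLp (1 / 3) u x h) ^ 2 - Apoly u x h ^ 2)
      - ((uLm (1 / 3) u x h) ^ 2 - Bpoly u x h ^ 2)) / (2 * h))
      =O[𝓝[>] (0 : ℝ)] fun h => h ^ 4 := by
    have hinv : (fun h : ℝ => (2 * h)⁻¹) =O[𝓝[>] (0 : ℝ)] fun h => h⁻¹ := by
      apply isBigO_of_le
      intro h
      rw [mul_inv, Real.norm_eq_abs, Real.norm_eq_abs, abs_mul]
      nlinarith [abs_nonneg (h⁻¹), abs_nonneg ((2 : ℝ)⁻¹), abs_of_pos (show (0:ℝ) < 2⁻¹ by norm_num)]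
    have hmul := (hN.mono nhdsWithin_le_nhds).mul hinv
    have heq : ∀ᶠ h in 𝓝[>] (0 : ℝ), h ^ 5 * h⁻¹ = h ^ 4 := by
      filter_upwards [self_mem_nhdsWithin] with h hh
      have h0 : h ≠ 0 := ne_of_gt hh
      field_simp
    refine (hmul.congr' (Eventually.of_forall fun h => (div_eq_mul_inv _ _).symm) heq)
  -- exact identity on the right neighbourhood
  have key : ∀ᶠ h in 𝓝[>] (0 : ℝ),
      umusclRes f (1 / 3) u x h -
        ((1 / 12) * (deriv u x * iteratedDeriv 2 u x) * h ^ 2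
          + (1 / 12) * (u x * iteratedDeriv 4 u x + deriv u x * iteratedDeriv 3 u x) * h ^ 3)
      = h ^ 4 * Qpoly u x h + (((uLp (1 / 3) u x h) ^ 2 - Apoly u x h ^ 2)
          - ((uLm (1 / 3) u x h) ^ 2 - Bpoly u x h ^ 2)) / (2 * h) := by
    filter_upwards [self_mem_nhdsWithin, hposp, hposm] with h hh hpp hmm
    have h0 : h ≠ 0 := ne_of_gt hh
    simp only [umusclRes, numFlux, hf, hdf]
    rw [abs_of_pos (show (0 : ℝ) < (uLp (1 / 3) u x h + uRp (1 / 3) u x h) / 2 by linarith),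
      abs_of_pos (show (0 : ℝ) < (uLm (1 / 3) u x h + uRm (1 / 3) u x h) / 2 by linarith)]
    unfold uLp uRp uLm uRm Apoly Bpoly Qpoly Tpoly
    field_simp
    ring
  have key' : (fun h : ℝ => umusclRes f (1 / 3) u x h -
        ((1 / 12) * (deriv u x * iteratedDeriv 2 u x) * h ^ 2
          + (1 / 12) * (u x * iteratedDeriv 4 u x + deriv u x * iteratedDeriv 3 u x) * h ^ 3))
      =ᶠ[𝓝[>] (0 : ℝ)] (fun h : ℝ => h ^ 4 * Qpoly u x h + (((uLp (1 / 3) u x h) ^ 2 - Apoly u x h ^ 2)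
          - ((uLm (1 / 3) u x h) ^ 2 - Bpoly u x h ^ 2)) / (2 * h)) := key
  exact (hterm1.add hterm2).congr' key'.symm EventuallyEq.rfl
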